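/- Let ω ∈ (0,∞], let w : (−ω,ω) → ℝ be infinitely differentiable with w(x) > 0 for all x, w(0) = 1, and ∫_{−ω}^{ω} w(x) dx < ∞. Let φ : (−ω,ω) → ℝ be infinitely differentiable with φ(x) > 0 for all x, and suppose there exist real numbers α₁, α₂, β₂ such that for all x ∈ (−ω,ω): x² w(x) = −α₁ x (φw)′(x) and (x² − β₂ + α₂ φ(x)) w(x) = −α₂ x (φw)′(x). Suppose further that w(x) → 0 and φ(x) w(x) → 0 as x → ω (as x → ∞ if ω = ∞). Then there exists c > 0 such that exactly one of the following holds: (i) ω = ∞ and w(x) = e^{−(cx)²/2} for all x; (ii) ω < ∞, cω = 1, and there exists a > −1 with w(x) = (1 − (cx)²)^a for all x; (iii) ω = ∞ and there exists a > −1/2 with w(x) = (1 + (cx)²)^{−a−1} for all x. -/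

import Mathlib

open MeasureTheory Filter Set Topology

lemma aux_comap_top :
    Filter.comap (fun x : ℝ => (x : EReal)) (nhdsWithin ⊤ (Set.Iio ⊤)) = atTop := by
  have h1 : (Set.Iio (⊤ : EReal)) = {(⊤ : EReal)}ᶜ := by
    ext x; simp [lt_top_iff_ne_top]
  rw [h1]
  rw [show (nhdsWithin (⊤:EReal) {(⊤:EReal)}ᶜ) = 𝓝[≠] (⊤:EReal) from rfl,
    EReal.nhdsWithin_top]
  exact Filter.comap_map (fun a b h => by exact_mod_cast h)

lemma aux_comap_coe (r : ℝ) :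
    Filter.comap (fun x : ℝ => (x : EReal)) (nhdsWithin (r : EReal) (Set.Iio (r : EReal)))
      = nhdsWithin r (Set.Iio r) := by
  rw [nhdsWithin, nhdsWithin, Filter.comap_inf, Filter.comap_principal]
  congr 1
  · exact (EReal.isEmbedding_coe.toIsInducing.nhds_eq_comap r).symm
  · congr 1
    ext x
    simp [EReal.coe_lt_coe_iff]

lemma aux_ode_unique {S : Set ℝ} (hSo : IsOpen S) (hSc : Convex ℝ S) (h0 : (0:ℝ) ∈ S)
    {w g q : ℝ → ℝ} (hw : DifferentiableOn ℝ w S)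
    (hwq : ∀ x ∈ S, deriv w x = q x * w x)
    (hg : ∀ x ∈ S, HasDerivAt g (q x * g x) x)
    (hgpos : ∀ x ∈ S, 0 < g x)
    (hw0 : w 0 = 1) (hg0 : g 0 = 1) : ∀ x ∈ S, w x = g x := by
  set F := fun x => w x / g x with hF
  have hFder : ∀ x ∈ S, HasDerivAt F 0 x := by
    intro x hx
    have hwd := (hw x hx).differentiableAt (hSo.mem_nhds hx)
    have hwx : HasDerivAt w (q x * w x) x := by
      rw [← hwq x hx]; exact hwd.hasDerivAt
    have h : HasDerivAt F ((q x * w x * g x - w x * (q x * g x)) / g x ^ 2) x :=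
      hwx.div (hg x hx) (ne_of_gt (hgpos x hx))
    convert h using 1
    rw [eq_comm, div_eq_zero_iff]
    left
    ring
  have hFd : DifferentiableOn ℝ F S := fun x hx =>
    ((hFder x hx).differentiableAt).differentiableWithinAt
  have key : ∀ x ∈ S, F x = F 0 := by
    intro x hx
    refine hSc.is_const_of_fderivWithin_eq_zero hFd (fun y hy => ?_) hx h0
    rw [fderivWithin_of_isOpen hSo hy, (hFder y hy).hasFDerivAt.fderiv]
    ext
    simp
  intro x hx
  have h1 := key x hx
  have h2 : F 0 = 1 := by simp [hF, hw0, hg0]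
  rw [h2] at h1
  have := hgpos x hx
  field_simp [hF] at h1
  simp only [hF] at h1
  exact (div_eq_one_iff_eq (ne_of_gt this)).mp h1

lemma aux_gauss_ne_cauchy {c a : ℝ} (hc : 0 < c) (ha : -(1/2:ℝ) < a)
    (h : ∀ x : ℝ, Real.exp (-(c*x)^2/2) = (1+(c*x)^2) ^ (-a-1)) : False := by
  have hc' : c ≠ 0 := ne_of_gt hc
  have h1 := h (1/c)
  have h2 := h (2/c)
  have e1 : c * (1/c) = 1 := by field_simp
  have e2 : c * (2/c) = 2 := by field_simp
  rw [e1] at h1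
  rw [e2] at h2
  norm_num at h1 h2
  have l1 := congrArg Real.log h1
  have l2 := congrArg Real.log h2
  rw [Real.log_exp, Real.log_rpow (by norm_num : (0:ℝ) < 2)] at l1
  rw [Real.log_exp, Real.log_rpow (by norm_num : (0:ℝ) < 5)] at l2
  have he : (-a-1) ≠ 0 := by linarith
  have key : 4 * Real.log 2 = Real.log 5 := by
    have h0 : (-a-1) * (4 * Real.log 2 - Real.log 5) = 0 := by linarith
    rcases mul_eq_zero.mp h0 with h | h
    · exact absurd h he
    · linarith
  have hlog : Real.log 16 = Real.log 5 := by
    rw [show (16:ℝ) = 2^(4:ℕ) by norm_num, Real.log_pow]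
    push_cast
    linarith
  have := Real.log_injOn_pos (by norm_num : (16:ℝ) ∈ Set.Ioi 0)
    (by norm_num : (5:ℝ) ∈ Set.Ioi 0) hlog
  norm_num at this

lemma aux_boundary {r : ℝ} {w g : ℝ → ℝ} (hr : 0 < r)
    (heq : ∀ x ∈ Set.Ioo (-r) r, w x = g x)
    (hcont : ContinuousAt g r) (hgr : g r ≠ 0)
    (hlim : Tendsto w (nhdsWithin r (Set.Iio r)) (nhds 0)) : False := by
  have hmem : Set.Ioo (-r) r ∈ nhdsWithin r (Set.Iio r) := by
    rw [← Set.Ioi_inter_Iio]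
    exact Filter.inter_mem (mem_nhdsWithin_of_mem_nhds (Ioi_mem_nhds (by linarith)))
      self_mem_nhdsWithin
  have h1 : Tendsto g (nhdsWithin r (Set.Iio r)) (nhds 0) :=
    hlim.congr' (Filter.eventuallyEq_of_mem hmem (fun x hx => heq x hx))
  have h2 : Tendsto g (nhdsWithin r (Set.Iio r)) (nhds (g r)) :=
    hcont.continuousWithinAt.mono (fun x _ => trivial) |>.tendsto |>.mono_left
      (nhdsWithin_mono r (fun x _ => trivial))
  exact hgr (tendsto_nhds_unique h2 h1)

set_option maxHeartbeats 1000000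

open MeasureTheory Filter

/-- The Gauss case of the classification: `ω = ∞` and `w(x) = e^{-(cx)²/2}` on `(-ω,ω)`. -/
def IsGaussCase (ω : EReal) (w : ℝ → ℝ) (c : ℝ) : Prop :=
  ω = ⊤ ∧ ∀ x : ℝ, -ω < (x : EReal) → (x : EReal) < ω → w x = Real.exp (-(c * x) ^ 2 / 2)

/-- The symmetric Jacobi case of the classification: `ω < ∞`, `cω = 1` and
`w(x) = (1-(cx)²)^a` on `(-ω,ω)` for some `a > -1`. -/
def IsJacobiCase (ω : EReal) (w : ℝ → ℝ) (c : ℝ) : Prop :=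
  ω < ⊤ ∧ c * ω.toReal = 1 ∧ ∃ a : ℝ, -1 < a ∧
    ∀ x : ℝ, -ω < (x : EReal) → (x : EReal) < ω → w x = (1 - (c * x) ^ 2) ^ a

/-- The Cauchy case of the classification: `ω = ∞` and `w(x) = (1+(cx)²)^{-a-1}` on
`(-ω,ω)` for some `a > -1/2`. -/
def IsCauchyCase (ω : EReal) (w : ℝ → ℝ) (c : ℝ) : Prop :=
  ω = ⊤ ∧ ∃ a : ℝ, -(1 / 2 : ℝ) < a ∧
    ∀ x : ℝ, -ω < (x : EReal) → (x : EReal) < ω → w x = (1 + (c * x) ^ 2) ^ (-a - 1)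

/-- classification of admissible symmetric weights, Theorem 4.1: a smooth
positive normalized integrable weight on `(-ω,ω)` satisfying the `k = 1` and `k = 2`
differentiated antiderivative recurrences and vanishing (together with `φw`) at the
boundary is, up to rescaling, exactly one of the Gauss, symmetric Jacobi or Cauchy weights. -/
theorem admissible_weight_classification (ω : EReal) (hω : (0 : EReal) < ω)
    (w φ : ℝ → ℝ)
    (hw : ContDiffOn ℝ (⊤ : ℕ∞) w {x : ℝ | -ω < (x : EReal) ∧ (x : EReal) < ω})
    (hwpos : ∀ x : ℝ, -ω < (x : EReal) → (x : EReal) < ω → 0 < w x)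
    (hw0 : w 0 = 1)
    (hwint : IntegrableOn w {x : ℝ | -ω < (x : EReal) ∧ (x : EReal) < ω})
    (hφ : ContDiffOn ℝ (⊤ : ℕ∞) φ {x : ℝ | -ω < (x : EReal) ∧ (x : EReal) < ω})
    (hφpos : ∀ x : ℝ, -ω < (x : EReal) → (x : EReal) < ω → 0 < φ x)
    (α₁ α₂ β₂ : ℝ)
    (heq1 : ∀ x : ℝ, -ω < (x : EReal) → (x : EReal) < ω →
      x ^ 2 * w x = -α₁ * x * deriv (fun y => φ y * w y) x)
    (heq2 : ∀ x : ℝ, -ω < (x : EReal) → (x : EReal) < ω →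
      (x ^ 2 - β₂ + α₂ * φ x) * w x = -α₂ * x * deriv (fun y => φ y * w y) x)
    (hlim1 : Tendsto w
      (Filter.comap (fun x : ℝ => (x : EReal)) (nhdsWithin ω (Set.Iio ω))) (nhds 0))
    (hlim2 : Tendsto (fun x => φ x * w x)
      (Filter.comap (fun x : ℝ => (x : EReal)) (nhdsWithin ω (Set.Iio ω))) (nhds 0)) :
    ∃ c : ℝ, 0 < c ∧
      ((IsGaussCase ω w c ∧ ¬ IsJacobiCase ω w c ∧ ¬ IsCauchyCase ω w c) ∨
       (¬ IsGaussCase ω w c ∧ IsJacobiCase ω w c ∧ ¬ IsCauchyCase ω w c) ∨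
       (¬ IsGaussCase ω w c ∧ ¬ IsJacobiCase ω w c ∧ IsCauchyCase ω w c)) := by
  set S : Set ℝ := {x : ℝ | -ω < (x : EReal) ∧ (x : EReal) < ω} with hSdef
  have hSopen : IsOpen S := by
    have h : S = (fun x : ℝ => (x : EReal)) ⁻¹' (Set.Ioo (-ω) ω) := rfl
    rw [h]
    exact isOpen_Ioo.preimage continuous_coe_real_ereal
  have h0S : (0:ℝ) ∈ S := by
    refine ⟨?_, by simpa using hω⟩
    have h : -ω < -0 := EReal.neg_lt_neg_iff.mpr (by simpa using hω)
    simpa using h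
  have hSconv : Convex ℝ S := by
    rw [convex_iff_ordConnected]
    constructor
    intro x hx y hy z hz
    exact ⟨lt_of_lt_of_le hx.1 (EReal.coe_le_coe_iff.mpr hz.1),
      lt_of_le_of_lt (EReal.coe_le_coe_iff.mpr hz.2) hy.2⟩
  have hwdiff : DifferentiableOn ℝ w S := hw.differentiableOn (by simp)
  have hx₀ : ∃ x : ℝ, x ∈ S ∧ 0 < x := by
    by_cases htop : ω = ⊤
    · refine ⟨1, ⟨?_, ?_⟩, one_pos⟩
      · rw [htop, EReal.neg_top]; exact EReal.bot_lt_coe 1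
      · rw [htop]; exact EReal.coe_lt_top 1
    · have hωbot : ω ≠ ⊥ := ne_bot_of_gt hω
      have hωr : ((ω.toReal : ℝ) : EReal) = ω := EReal.coe_toReal htop hωbot
      have hr : 0 < ω.toReal := by
        have h := hω
        rw [← hωr] at h
        exact_mod_cast h
      refine ⟨ω.toReal/2, ⟨?_, ?_⟩, by linarith⟩
      · refine lt_of_lt_of_le h0S.1 ?_
        exact_mod_cast (by linarith : (0:ℝ) ≤ ω.toReal/2)
      · rw [← hωr]; exact_mod_cast (by linarith : ω.toReal/2 < ω.toReal)
  obtain ⟨x₀, hx₀S, hx₀pos⟩ := hx₀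
  have hα₁ : α₁ ≠ 0 := by
    intro h
    have h1 := heq1 x₀ hx₀S.1 hx₀S.2
    rw [h] at h1
    have h2 : x₀ ^ 2 * w x₀ = 0 := by linear_combination h1
    have := mul_pos (pow_pos hx₀pos 2) (hwpos x₀ hx₀S.1 hx₀S.2)
    linarith
  have hα₂ : α₂ ≠ 0 := by
    intro h
    have h1 := heq2 x₀ hx₀S.1 hx₀S.2
    have h2 := heq2 0 h0S.1 h0S.2
    rw [h] at h1 h2
    have hw1 := hwpos x₀ hx₀S.1 hx₀S.2
    have h1' : (x₀^2 - β₂) * w x₀ = 0 := by linear_combination h1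
    have h2' : ((0:ℝ)^2 - β₂) * w 0 = 0 := by linear_combination h2
    have e1 : x₀^2 - β₂ = 0 := (mul_eq_zero.mp h1').resolve_right (ne_of_gt hw1)
    rw [hw0] at h2'
    have e2 : β₂ = 0 := by nlinarith [h2']
    have := pow_pos hx₀pos 2
    nlinarith
  set A : ℝ := (α₂ - α₁)/(α₁*α₂) with hAdef
  set B : ℝ := β₂/α₂ with hBdef
  have hφeq : ∀ x ∈ S, φ x = A*x^2 + B := by
    intro x hx
    have h1 := heq1 x hx.1 hx.2
    have h2 := heq2 x hx.1 hx.2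
    have hwx := hwpos x hx.1 hx.2
    have key : α₂ * (x^2 * w x) = α₁ * ((x^2 - β₂ + α₂ * φ x) * w x) := by
      rw [h1, h2]; ring
    have key2 : (α₂ * x^2 - α₁ * (x^2 - β₂ + α₂ * φ x)) * w x = 0 := by
      linear_combination key
    have key3 : α₂ * x^2 - α₁ * (x^2 - β₂ + α₂ * φ x) = 0 :=
      (mul_eq_zero.mp key2).resolve_right (ne_of_gt hwx)
    have hne : α₁ * α₂ ≠ 0 := mul_ne_zero hα₁ hα₂
    have hres : φ x = ((α₂ - α₁) * x^2 + α₁ * β₂) / (α₁ * α₂) := by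
      rw [eq_div_iff hne]
      linear_combination -key3
    rw [hres, hAdef, hBdef]
    field_simp
  have hB : 0 < B := by
    have := hφpos 0 h0S.1 h0S.2
    rw [hφeq 0 h0S] at this
    simpa using this
  have hφB : ∀ x ∈ S, 0 < A*x^2 + B := by
    intro x hx
    rw [← hφeq x hx]
    exact hφpos x hx.1 hx.2
  -- derivative of the product on S
  have hprod : ∀ x ∈ S, deriv (fun y => φ y * w y) x
      = 2*A*x*(w x) + (A*x^2+B) * deriv w x := by
    intro x hx
    have hwx : HasDerivAt w (deriv w x) x :=
      ((hwdiff x hx).differentiableAt (hSopen.mem_nhds hx)).hasDerivAt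
    have hpoly : HasDerivAt (fun y : ℝ => A*y^2+B) (2*A*x) x := by
      have h := ((hasDerivAt_pow 2 x).const_mul A).add_const B
      exact h.congr_deriv (by simp; ring)
    have hmul := hpoly.mul hwx
    have heqn : (fun y => φ y * w y) =ᶠ[nhds x] (fun y => (A*y^2+B) * w y) :=
      Filter.eventuallyEq_of_mem (hSopen.mem_nhds hx) (fun y hy => by rw [hφeq y hy])
    rw [heqn.deriv_eq]; exact hmul.deriv
  have hODEne : ∀ x ∈ S, x ≠ 0 →
      (A*x^2+B) * deriv w x = -(1/α₁ + 2*A) * x * w x := by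
    intro x hx hxne
    have h1 := heq1 x hx.1 hx.2
    rw [hprod x hx] at h1
    have hstep : x * (x * w x + α₁ * (2*A*x*w x + (A*x^2+B) * deriv w x)) = 0 := by
      linear_combination h1
    have h2 : x * w x + α₁ * (2*A*x*w x + (A*x^2+B)*deriv w x) = 0 :=
      (mul_eq_zero.mp hstep).resolve_left hxne
    have hinv : α₁ * (1/α₁) = 1 := by field_simp
    have h3 : α₁ * ((A*x^2+B) * deriv w x) = α₁ * (-(1/α₁+2*A) * x * w x) := by
      linear_combination h2 + (x * w x) * hinv
    exact mul_left_cancel₀ hα₁ h3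
  -- derivative of w vanishes at 0
  have hw'0 : deriv w 0 = 0 := by
    set ψ : ℝ → ℝ := fun x => (A*x^2+B) * deriv w x + (1/α₁+2*A) * x * w x with hψ
    have hψcont : ContinuousOn ψ S := by
      apply ContinuousOn.add
      · exact ContinuousOn.mul (by fun_prop)
          (hw.continuousOn_deriv_of_isOpen hSopen (by simp))
      · exact ContinuousOn.mul (by fun_prop) hwdiff.continuousOn
    have hrw : nhdsWithin (0:ℝ) (S \ {0}) = nhdsWithin (0:ℝ) {(0:ℝ)}ᶜ := by
      rw [diff_eq, Set.inter_comm]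
      exact (nhdsWithin_restrict' _ (hSopen.mem_nhds h0S)).symm
    haveI hne : (nhdsWithin (0:ℝ) (S \ {0})).NeBot := by
      rw [hrw]; infer_instance
    have t1 : Tendsto ψ (nhdsWithin 0 (S \ {0})) (nhds (ψ 0)) :=
      (hψcont 0 h0S).mono diff_subset
    have t2 : Tendsto ψ (nhdsWithin 0 (S \ {0})) (nhds 0) := by
      refine Tendsto.congr' ?_ tendsto_const_nhds
      filter_upwards [self_mem_nhdsWithin] with y hy
      have := hODEne y hy.1 (by simpa using hy.2)
      simp only [hψ]
      linarith
    have hψ0 : ψ 0 = 0 := tendsto_nhds_unique t1 t2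
    have hB0 : B * deriv w 0 = 0 := by
      simp only [hψ] at hψ0
      nlinarith [hψ0]
    exact (mul_eq_zero.mp hB0).resolve_left (ne_of_gt hB)
  have hODE : ∀ x ∈ S, deriv w x = (-(1/α₁+2*A) * x / (A*x^2+B)) * w x := by
    intro x hx
    rcases eq_or_ne x 0 with rfl | hxne
    · simp [hw'0]
    · have h := hODEne x hx hxne
      have hP := hφB x hx
      rw [div_mul_eq_mul_div, eq_div_iff (ne_of_gt hP)]
      linarith [h]
  have hbot : ∀ x : ℝ, -(⊤:EReal) < (x : EReal) := fun x => by
    rw [EReal.neg_top]; exact EReal.bot_lt_coe x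
  rcases eq_or_ne A 0 with hA0 | hA
  · -- Gauss case
    set μ : ℝ := 1/(α₁*B) with hμdef
    set g : ℝ → ℝ := fun x => Real.exp (-(μ * x^2)/2) with hgdef
    have hgder : ∀ x : ℝ, HasDerivAt g ((-μ*x) * g x) x := by
      intro x
      have h1 : HasDerivAt (fun y:ℝ => -(μ*y^2)/2) (-μ*x) x := by
        have h := (((hasDerivAt_pow 2 x).const_mul μ).neg).div_const 2
        exact h.congr_deriv (by simp; ring)
      have h2 := h1.exp
      convert h2 using 1
      simp only [hgdef]
      ring
    have hq : ∀ x ∈ S, deriv w x = (-μ*x) * w x := by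
      intro x hx
      rw [hODE x hx]
      congr 1
      rw [hA0, hμdef]
      field_simp
      ring
    have hwg : ∀ x ∈ S, w x = g x :=
      aux_ode_unique hSopen hSconv h0S hwdiff hq (fun x _ => hgder x)
        (fun x _ => Real.exp_pos _) hw0 (by simp [hgdef])
    rcases eq_or_ne ω ⊤ with htop | htop
    · -- ω = ⊤ : genuinely the Gauss weight
      have hStop : ∀ x : ℝ, x ∈ S := fun x =>
        ⟨by rw [htop]; exact hbot x, by rw [htop]; exact EReal.coe_lt_top x⟩
      rw [htop, aux_comap_top] at hlim1
      have hμpos : 0 < μ := by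
        by_contra hle
        push_neg at hle
        have h1 : ∀ x : ℝ, (1:ℝ) ≤ w x := by
          intro x
          rw [hwg x (hStop x)]
          simp only [hgdef]
          exact Real.one_le_exp (by nlinarith [sq_nonneg x])
        rcases (hlim1.eventually_lt_const one_pos).exists with ⟨x, hx⟩
        linarith [h1 x]
      have hc : 0 < Real.sqrt μ := Real.sqrt_pos.mpr hμpos
      have hGform : ∀ x : ℝ, w x = Real.exp (-(Real.sqrt μ * x)^2/2) := by
        intro x
        rw [hwg x (hStop x)]
        simp only [hgdef]
        congr 1
        rw [mul_pow, Real.sq_sqrt hμpos.le]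
      refine ⟨Real.sqrt μ, hc, Or.inl ⟨⟨htop, fun x _ _ => hGform x⟩, ?_, ?_⟩⟩
      · intro hJ
        exact absurd (htop ▸ hJ.1) (lt_irrefl ⊤)
      · rintro ⟨-, a, ha, hfun⟩
        refine aux_gauss_ne_cauchy hc ha (fun x => ?_)
        rw [← hGform x]
        exact hfun x (htop ▸ hbot x) (htop ▸ EReal.coe_lt_top x)
    · -- ω finite : impossible since the Gauss weight has no zero boundary limit
      exfalso
      have hωbot : ω ≠ ⊥ := ne_bot_of_gt hω
      have hωr : ((ω.toReal : ℝ) : EReal) = ω := EReal.coe_toReal htop hωbot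
      have hr : 0 < ω.toReal := by
        have h := hω; rw [← hωr] at h; exact_mod_cast h
      have hSIoo : ∀ x ∈ Set.Ioo (-ω.toReal) ω.toReal, x ∈ S := by
        intro x hx
        constructor
        · rw [← hωr, ← EReal.coe_neg]; exact_mod_cast hx.1
        · rw [← hωr]; exact_mod_cast hx.2
      rw [← hωr, aux_comap_coe] at hlim1
      refine aux_boundary hr (fun x hx => hwg x (hSIoo x hx)) ?_
        (ne_of_gt (Real.exp_pos _)) hlim1
      exact (Real.continuous_exp.comp (by fun_prop)).continuousAt
  · -- A ≠ 0 : Cauchy or Jacobi case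
    set t : ℝ := A/B with htdef
    have ht : t ≠ 0 := div_ne_zero hA (ne_of_gt hB)
    set p : ℝ := (1/α₁ + 2*A)/(2*A) with hpdef
    have hbase : ∀ x ∈ S, 0 < 1 + t*x^2 := by
      intro x hx
      have h1 := hφB x hx
      have h2 : 1 + t*x^2 = (A*x^2+B)/B := by
        rw [htdef]; field_simp; ring
      rw [h2]
      exact div_pos h1 hB
    set g : ℝ → ℝ := fun x => (1 + t*x^2) ^ (-p) with hgdef
    have hgpos : ∀ x ∈ S, 0 < g x := fun x hx => Real.rpow_pos_of_pos (hbase x hx) _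
    have hgder : ∀ x ∈ S,
        HasDerivAt g ((-(1/α₁+2*A) * x / (A*x^2+B)) * g x) x := by
      intro x hx
      have hb := hbase x hx
      have hP := hφB x hx
      have hinner : HasDerivAt (fun y:ℝ => 1 + t*y^2) (2*t*x) x := by
        have h := ((hasDerivAt_pow 2 x).const_mul t).const_add 1
        exact h.congr_deriv (by simp; ring)
      have h2 := hinner.rpow_const (p := -p) (Or.inl (ne_of_gt hb))
      convert h2 using 1
      rw [Real.rpow_sub_one (ne_of_gt hb)]
      have key : -(1/α₁+2*A) * x / (A*x^2+B) = 2*t*x * (-p) / (1+t*x^2) := by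
        rw [htdef, hpdef]
        rw [div_eq_div_iff (ne_of_gt hP) (by rw [← htdef]; exact ne_of_gt hb)]
        field_simp
        ring
      simp only [hgdef]
      rw [key]
      ring
    have hq : ∀ x ∈ S, deriv w x = (-(1/α₁+2*A) * x / (A*x^2+B)) * w x := hODE
    have hwg : ∀ x ∈ S, w x = g x :=
      aux_ode_unique hSopen hSconv h0S hwdiff hq hgder hgpos hw0 (by simp [hgdef])
    rcases lt_or_gt_of_ne ht with htneg | htpos
    · -- t < 0 : Jacobi case
      set c : ℝ := Real.sqrt (-t) with hcdef
      have hc : 0 < c := Real.sqrt_pos.mpr (by linarith)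
      have hc2 : c^2 = -t := Real.sq_sqrt (by linarith)
      have ht' : t = -c^2 := by linarith
      have hcc : -c^2*(1/c)^2 = -1 := by field_simp
      have htop : ω ≠ ⊤ := by
        intro htop
        have hStop : ∀ x : ℝ, x ∈ S := fun x =>
          ⟨by rw [htop]; exact hbot x, by rw [htop]; exact EReal.coe_lt_top x⟩
        have hb := hbase (1/c) (hStop _)
        rw [ht', hcc] at hb
        norm_num at hb
      have hωbot : ω ≠ ⊥ := ne_bot_of_gt hω
      set r : ℝ := ω.toReal with hrdef
      have hωr : ((r : ℝ) : EReal) = ω := EReal.coe_toReal htop hωbot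
      have hr : 0 < r := by
        have h := hω; rw [← hωr] at h; exact_mod_cast h
      have hSIoo : ∀ x ∈ Set.Ioo (-r) r, x ∈ S := by
        intro x hx
        constructor
        · rw [← hωr, ← EReal.coe_neg]; exact_mod_cast hx.1
        · rw [← hωr]; exact_mod_cast hx.2
      rw [← hωr, aux_comap_coe] at hlim1 hlim2
      have hrle : r ≤ 1/c := by
        by_contra hlt
        push_neg at hlt
        have h1c : (0:ℝ) < 1/c := by positivity
        have hb := hbase (1/c) (hSIoo _ ⟨by linarith, hlt⟩)
        rw [ht', hcc] at hb
        norm_num at hb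
      have hge : 1/c ≤ r := by
        by_contra hlt
        push_neg at hlt
        have h1 : r * c < 1 := (lt_div_iff₀ hc).mp hlt
        have hbr : 0 < 1 + t*r^2 := by
          rw [ht']
          nlinarith [mul_nonneg hr.le hc.le]
        have hcont : ContinuousAt g r := by
          simp only [hgdef]
          have hin : ContinuousAt (fun y:ℝ => 1 + t*y^2) r := by fun_prop
          exact hin.rpow_const (Or.inl (ne_of_gt hbr))
        have hgr : g r ≠ 0 := by
          simp only [hgdef]
          exact ne_of_gt (Real.rpow_pos_of_pos hbr _)
        exact aux_boundary hr (fun x hx => hwg x (hSIoo x hx)) hcont hgr hlim1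
      have hre : r = 1/c := le_antisymm hrle hge
      have hcr : c * r = 1 := by rw [hre]; field_simp
      have ha : -1 < -p := by
        by_contra hle
        push_neg at hle
        have hlow : ∀ x ∈ Set.Ioo (0:ℝ) r, B ≤ φ x * w x := by
          intro x hx
          have hxS : x ∈ S := hSIoo x ⟨by linarith [hx.1], hx.2⟩
          have hb := hbase x hxS
          have hble : 1 + t*x^2 ≤ 1 := by nlinarith [sq_nonneg x]
          have hφx : φ x = B * (1+t*x^2) := by
            rw [hφeq x hxS, htdef]; field_simp; ring
          rw [hφx, hwg x hxS]
          simp only [hgdef]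
          have h1 : (1:ℝ) ≤ (1+t*x^2) * (1+t*x^2)^(-p) := by
            have h2 : (1+t*x^2) * (1+t*x^2)^(-p) = (1+t*x^2)^(1+(-p)) := by
              rw [Real.rpow_add hb, Real.rpow_one]
            rw [h2]
            exact Real.one_le_rpow_of_pos_of_le_one_of_nonpos hb hble (by linarith)
          calc B = B * 1 := by ring
            _ ≤ B * ((1+t*x^2) * (1+t*x^2)^(-p)) := by
                exact mul_le_mul_of_nonneg_left h1 hB.le
            _ = B * (1+t*x^2) * (1+t*x^2)^(-p) := by ring
        have hev1 : ∀ᶠ x in nhdsWithin r (Set.Iio r), φ x * w x < B :=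
          hlim2.eventually_lt_const hB
        have hev2 : Set.Ioo (0:ℝ) r ∈ nhdsWithin r (Set.Iio r) := by
          rw [← Set.Ioi_inter_Iio]
          exact Filter.inter_mem (mem_nhdsWithin_of_mem_nhds (Ioi_mem_nhds hr))
            self_mem_nhdsWithin
        rcases (hev1.and (Filter.eventually_of_mem hev2 (fun x hx => hx))).exists
          with ⟨x, hx1, hx2⟩
        linarith [hlow x hx2]
      have hJform : ∀ x ∈ S, w x = (1-(c*x)^2) ^ (-p) := by
        intro x hx
        rw [hwg x hx]
        simp only [hgdef]
        congr 1
        rw [ht', mul_pow]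
        ring
      refine ⟨c, hc, Or.inr (Or.inl ⟨?_, ⟨?_, ?_, -p, ha,
        fun x hx1 hx2 => hJform x ⟨hx1, hx2⟩⟩, ?_⟩)⟩
      · intro hG; exact htop hG.1
      · rw [← hωr]; exact EReal.coe_lt_top r
      · exact hcr
      · intro hC; exact htop hC.1
    · -- t > 0 : Cauchy case
      rcases eq_or_ne ω ⊤ with htop | htop
      swap
      · -- finite ω impossible
        exfalso
        have hωbot : ω ≠ ⊥ := ne_bot_of_gt hω
        set r : ℝ := ω.toReal with hrdef
        have hωr : ((r : ℝ) : EReal) = ω := EReal.coe_toReal htop hωbot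
        have hr : 0 < r := by
          have h := hω; rw [← hωr] at h; exact_mod_cast h
        have hSIoo : ∀ x ∈ Set.Ioo (-r) r, x ∈ S := by
          intro x hx
          constructor
          · rw [← hωr, ← EReal.coe_neg]; exact_mod_cast hx.1
          · rw [← hωr]; exact_mod_cast hx.2
        rw [← hωr, aux_comap_coe] at hlim1
        have hbr : 0 < 1 + t*r^2 := by nlinarith [sq_nonneg r]
        have hcont : ContinuousAt g r := by
          simp only [hgdef]
          have hin : ContinuousAt (fun y:ℝ => 1 + t*y^2) r := by fun_prop
          exact hin.rpow_const (Or.inl (ne_of_gt hbr))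
        have hgr : g r ≠ 0 := by
          simp only [hgdef]
          exact ne_of_gt (Real.rpow_pos_of_pos hbr _)
        exact aux_boundary hr (fun x hx => hwg x (hSIoo x hx)) hcont hgr hlim1
      · -- ω = ⊤
        have hStop : ∀ x : ℝ, x ∈ S := fun x =>
          ⟨by rw [htop]; exact hbot x, by rw [htop]; exact EReal.coe_lt_top x⟩
        rw [htop, aux_comap_top] at hlim1
        have hppos : 0 < p := by
          by_contra hle
          push_neg at hle
          have h1 : ∀ x : ℝ, (1:ℝ) ≤ w x := by
            intro x
            rw [hwg x (hStop x)]
            simp only [hgdef]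
            exact Real.one_le_rpow (by nlinarith [sq_nonneg x]) (by linarith)
          rcases (hlim1.eventually_lt_const one_pos).exists with ⟨x, hx⟩
          linarith [h1 x]
        have hint : IntegrableOn w (Set.Ioi (1:ℝ)) :=
          hwint.mono_set (fun x _ => hStop x)
        have hptpos : (0:ℝ) < 1 + t := by linarith
        have hcont2 : ContinuousOn (fun x:ℝ => (1+t)^(-p) * x ^ (-(2*p))) (Set.Ioi 1) := by
          apply continuousOn_const.mul
          intro x hx
          have hx1 : (1:ℝ) < x := hx
          exact (Real.continuousAt_rpow_const _ _ (Or.inl (by positivity))).continuousWithinAt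
        have hintc : IntegrableOn (fun x:ℝ => (1+t)^(-p) * x ^ (-(2*p))) (Set.Ioi 1) := by
          refine Integrable.mono hint (hcont2.aestronglyMeasurable measurableSet_Ioi) ?_
          filter_upwards [ae_restrict_mem measurableSet_Ioi] with x hx
          have hx1 : (1:ℝ) < x := hx
          have hx0 : (0:ℝ) < x := by linarith
          have hb1 : (0:ℝ) < 1 + t*x^2 := by nlinarith
          have hble : 1 + t*x^2 ≤ (1+t)*x^2 := by nlinarith [sq_nonneg x]
          have hkey : (1+t)^(-p) * x ^ (-(2*p)) ≤ w x := by
            rw [hwg x (hStop x)]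
            simp only [hgdef]
            have h1 : ((1+t)*x^2) ^ (-p) ≤ (1+t*x^2)^(-p) :=
              Real.rpow_le_rpow_of_nonpos hb1 hble (by linarith)
            calc (1+t)^(-p) * x ^ (-(2*p)) = ((1+t)*x^2)^(-p) := by
                  rw [Real.mul_rpow hptpos.le (by positivity)]
                  congr 1
                  rw [← Real.rpow_natCast x 2, ← Real.rpow_mul hx0.le]
                  norm_num
              _ ≤ (1+t*x^2)^(-p) := h1
          have hwx : 0 < w x := hwpos x (hStop x).1 (hStop x).2
          have hfx : 0 < (1+t)^(-p) * x ^ (-(2*p)) :=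
            mul_pos (Real.rpow_pos_of_pos hptpos _) (Real.rpow_pos_of_pos hx0 _)
          rw [Real.norm_eq_abs, Real.norm_eq_abs, abs_of_pos hwx, abs_of_pos hfx]
          exact hkey
        have hint3 : IntegrableOn (fun x:ℝ => x ^ (-(2*p))) (Set.Ioi 1) := by
          have h := hintc.const_mul ((1+t)^(p:ℝ))
          refine h.congr (ae_of_all _ (fun x => ?_))
          show (1+t)^(p:ℝ) * ((1+t)^(-p) * x ^ (-(2*p))) = x ^ (-(2*p))
          rw [← mul_assoc, ← Real.rpow_add hptpos]
          norm_num
        rw [integrableOn_Ioi_rpow_iff zero_lt_one] at hint3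
        set c : ℝ := Real.sqrt t with hcdef
        have hc : 0 < c := Real.sqrt_pos.mpr htpos
        have hCform : ∀ x : ℝ, w x = (1+(c*x)^2) ^ (-(p-1)-1) := by
          intro x
          rw [hwg x (hStop x)]
          simp only [hgdef]
          rw [mul_pow, Real.sq_sqrt htpos.le, show -(p-1)-1 = -p by ring]
        refine ⟨c, hc, Or.inr (Or.inr ⟨?_, ?_,
          ⟨htop, p-1, by linarith, fun x _ _ => hCform x⟩⟩)⟩
        · rintro ⟨-, hfun⟩
          refine aux_gauss_ne_cauchy hc (by linarith : -(1/2:ℝ) < p-1) (fun x => ?_)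
          exact ((hfun x (htop ▸ hbot x) (htop ▸ EReal.coe_lt_top x)).symm).trans (hCform x)
        · intro hJ; exact absurd (htop ▸ hJ.1) (lt_irrefl ⊤)
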